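/- Let E : Y² = X³ + A·X + B be an elliptic curve with A, B ∈ ℤ and 4A³ + 27B² ≠ 0. If (x, y) ∈ E(ℚ) is a point of order 3, then there exist integers z₁, z₂ such that x = 3z₁², y = 9z₁³ + z₂ or y = −(9z₁³ + z₂), A = 27z₁⁴ + 6z₁z₂, and B = z₂² − 27z₁⁶. -/

import Mathlib

/-!
If `P = (x, y)` has order 3 then `2P = -P`, so `y ≠ 0` and the tangent slope
`L = (3x² + A) / (2y)` satisfies `L² - 2x = x`, i.e. `L² = 3x`. Eliminating `y`, the number
`3x` is a root of the monic quartic `X⁴ + 18AX² + 108BX - 27A²` (the rescaled 3-division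
polynomial), so it is an integer; hence so is `L`, and reducing the quartic mod 3 gives
`L = 3z₁`, so `x = 3z₁²`. Then `y² ∈ ℤ` makes `y = w` an integer, and with `z₂ = w - 9z₁³` the
relations `2yL = 3x² + A` and `y² = x³ + Ax + B` become the stated formulas for `A` and `B`.
-/

open WeierstrassCurve WeierstrassCurve.Affine Polynomial

/-- The elliptic curve `E : Y² = X³ + A·X + B` over `ℚ`, as an affine Weierstrass curve. -/
noncomputable def E (A B : ℤ) : WeierstrassCurve.Affine ℚ :=
  { a₁ := 0, a₂ := 0, a₃ := 0, a₄ := (A : ℚ), a₆ := (B : ℚ) }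

section OrderThree

variable {F : Type*} [Field F] [DecidableEq F] {W : Affine F} {x y : F} {h : W.Nonsingular x y}

lemma Y_ne_negY_of_addOrderOf_eq_three (hord : addOrderOf (Point.some x y h) = 3) :
    y ≠ W.negY x y := by
  intro hy
  have : addOrderOf (Point.some x y h) ∣ 2 :=
    addOrderOf_dvd_of_nsmul_eq_zero (by rw [two_nsmul]; exact Point.add_self_of_Y_eq hy)
  rw [hord] at this
  norm_num at this

lemma addX_slope_self_of_addOrderOf_eq_three (hord : addOrderOf (Point.some x y h) = 3) :
    W.addX x x (W.slope x x y y) = x := by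
  have hy := Y_ne_negY_of_addOrderOf_eq_three hord
  have hdouble : Point.some x y h + Point.some x y h = -Point.some x y h := by
    refine eq_neg_of_add_eq_zero_left ?_
    rw [← addOrderOf_nsmul_eq_zero (Point.some x y h), hord]
    abel
  rw [Point.add_self_of_Y_ne' hy, neg_inj] at hdouble
  injection hdouble

end OrderThree

lemma isIntegral_of_quartic_eq_zero {K : Type*} [CommRing K] {u : K} (a b c : ℤ)
    (h : u ^ 4 + a * u ^ 2 + b * u + c = 0) : IsIntegral ℤ u :=
  ⟨X ^ 4 + C a * X ^ 2 + C b * X + C c, by monicity!, by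
    simp only [eval₂_add, eval₂_mul, eval₂_C, eval₂_X_pow, eval₂_X]
    simpa only [algebraMap_int_eq, eq_intCast] using h⟩

section ShortWeierstrass

variable {A B : ℤ} {x y : ℚ}

lemma E_equation_iff : (E A B).Equation x y ↔ y ^ 2 = x ^ 3 + A * x + B := by
  rw [equation_iff]
  simp only [E]
  constructor <;> intro h <;> linear_combination h

lemma E_negY : (E A B).negY x y = -y := by
  simp [E, negY]

lemma E_slope_self (hy : y ≠ 0) : (E A B).slope x x y y = (3 * x ^ 2 + A) / (2 * y) := by
  rw [slope_of_Y_ne rfl (by rw [E_negY]; contrapose! hy; linarith)]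
  simp only [E, negY]
  ring

lemma E_addX (L : ℚ) : (E A B).addX x x L = L ^ 2 - 2 * x := by
  simp only [E, addX]
  ring

lemma exists_slope_of_addOrderOf_eq_three {h : (E A B).Nonsingular x y}
    (hord : addOrderOf (Point.some x y h) = 3) :
    ∃ L : ℚ, L * (2 * y) = 3 * x ^ 2 + A ∧ L ^ 2 = 3 * x := by
  have hy : y ≠ 0 := by
    have := Y_ne_negY_of_addOrderOf_eq_three hord
    contrapose! this
    rw [E_negY, this, neg_zero]
  have hx := addX_slope_self_of_addOrderOf_eq_three hord
  rw [E_slope_self hy, E_addX] at hx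
  exact ⟨_, div_mul_cancel₀ _ (by positivity), by linear_combination hx⟩

end ShortWeierstrass

lemma exists_int_eq_of_pow_eq_intCast {y : ℚ} {n : ℕ} (hn : 0 < n) {k : ℤ} (hy : y ^ n = k) :
    ∃ w : ℤ, y = w := by
  obtain ⟨w, hw⟩ := IsIntegrallyClosed.exists_algebraMap_eq_of_isIntegral_pow hn
    (by rw [hy]; exact isIntegral_algebraMap (x := k))
  exact ⟨w, hw.symm⟩

lemma exists_slope_eq_three_mul_intCast {A B : ℤ} {x y L : ℚ} (hE : y ^ 2 = x ^ 3 + A * x + B)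
    (hL : L * (2 * y) = 3 * x ^ 2 + A) (hsq : L ^ 2 = 3 * x) : ∃ z : ℤ, L = 3 * z := by
  have hψ : (3 * x) ^ 4 + (18 * A : ℤ) * (3 * x) ^ 2 + (108 * B : ℤ) * (3 * x)
      + (-27 * A ^ 2 : ℤ) = 0 := by
    have h1 : (3 * x ^ 2 + A) ^ 2 = 12 * x * y ^ 2 := by
      rw [← hL]
      linear_combination 4 * y ^ 2 * hsq
    push_cast
    linear_combination -324 * x * hE - 27 * h1
  obtain ⟨m, rfl⟩ := IsIntegrallyClosed.exists_algebraMap_eq_of_isIntegral_pow two_pos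
    (hsq ▸ isIntegral_of_quartic_eq_zero _ _ _ hψ)
  have hm : m ^ 8 = 3 * (-6 * A * m ^ 4 - 36 * B * m ^ 2 + 9 * A ^ 2) := by
    rw [← hsq] at hψ
    simp only [algebraMap_int_eq, eq_intCast] at hψ
    push_cast at hψ
    qify
    linear_combination hψ
  obtain ⟨z, rfl⟩ := Int.prime_three.dvd_of_dvd_pow (Dvd.intro _ hm.symm)
  exact ⟨z, by simp⟩

theorem order_three_coords_general (A B : ℤ)
    (x y : ℚ) (h : (E A B).Nonsingular x y)
    (hord : addOrderOf (WeierstrassCurve.Affine.Point.some x y h) = 3) :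
    ∃ z₁ z₂ : ℤ, x = ((3 * z₁ ^ 2 : ℤ) : ℚ) ∧
      (y = ((9 * z₁ ^ 3 + z₂ : ℤ) : ℚ) ∨ y = -((9 * z₁ ^ 3 + z₂ : ℤ) : ℚ)) ∧
      A = 27 * z₁ ^ 4 + 6 * z₁ * z₂ ∧ B = z₂ ^ 2 - 27 * z₁ ^ 6 := by
  obtain ⟨L, hL, hsq⟩ := exists_slope_of_addOrderOf_eq_three hord
  have hE : y ^ 2 = x ^ 3 + A * x + B := E_equation_iff.mp h.1
  obtain ⟨z₁, rfl⟩ := exists_slope_eq_three_mul_intCast hE hL hsq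
  obtain rfl : x = 3 * z₁ ^ 2 := by linear_combination -hsq / 3
  obtain ⟨w, rfl⟩ := exists_int_eq_of_pow_eq_intCast two_pos
    (k := 27 * z₁ ^ 6 + 3 * A * z₁ ^ 2 + B)
    (by rw [hE]; push_cast; ring)
  refine ⟨z₁, w - 9 * z₁ ^ 3, by push_cast; ring, Or.inl (by push_cast; ring), ?_, ?_⟩
  · qify
    linear_combination -hL
  · qify
    linear_combination -hE + 3 * z₁ ^ 2 * hL

theorem order_three_coords (A B : ℤ) (hΔ : 4 * A ^ 3 + 27 * B ^ 2 ≠ 0)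
    (x y : ℚ) (h : (E A B).Nonsingular x y)
    (hord : addOrderOf (WeierstrassCurve.Affine.Point.some x y h) = 3) :
    ∃ z₁ z₂ : ℤ, x = ((3 * z₁ ^ 2 : ℤ) : ℚ) ∧
      (y = ((9 * z₁ ^ 3 + z₂ : ℤ) : ℚ) ∨ y = -((9 * z₁ ^ 3 + z₂ : ℤ) : ℚ)) ∧
      A = 27 * z₁ ^ 4 + 6 * z₁ * z₂ ∧ B = z₂ ^ 2 - 27 * z₁ ^ 6 :=
  order_three_coords_general A B x y h hord
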